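/- Let (X,φ) be a non-wandering expansive dynamical system and x ∈ X a synchronizing point. Then every neighborhood U of x contains a periodic point of φ. -/
import Mathlib


open Filter Topology Set

namespace Paper

variable {X : Type*} [MetricSpace X] [CompactSpace X]

/-- The `n`-th iterate (for `n : ℤ`) of the homeomorphism `φ`. -/
def It (φ : X ≃ₜ X) (n : ℤ) : X → X := fun x => (φ.toEquiv ^ n) x

/-- The local stable set `Xˢ(x, ε)`. -/
def locS (φ : X ≃ₜ X) (x : X) (ε : ℝ) : Set X :=
  {y | ∀ n : ℕ, dist (It φ n x) (It φ n y) ≤ ε}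

/-- The local unstable set `Xᵘ(x, ε)`. -/
def locU (φ : X ≃ₜ X) (x : X) (ε : ℝ) : Set X :=
  {y | ∀ n : ℕ, dist (It φ (-(n : ℤ)) x) (It φ (-(n : ℤ)) y) ≤ ε}

/-- The set `D_ε` on which the bracket is defined. -/
def Dset (φ : X ≃ₜ X) (ε : ℝ) : Set (X × X) :=
  {p | (locS φ p.1 ε ∩ locU φ p.2 ε).Nonempty}

/-- `(X, φ)` is expansive with expansiveness constant `εX`. -/
def IsExpansive (φ : X ≃ₜ X) (εX : ℝ) : Prop :=
  0 < εX ∧ ∀ x y : X, (∀ n : ℤ, dist (It φ n x) (It φ n y) ≤ εX) → x = y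

/-- The metric is adapted (Fried), with constants `η` and `lam`. -/
def IsAdapted (φ : X ≃ₜ X) (η lam : ℝ) : Prop :=
  0 < η ∧ 0 < lam ∧ lam < 1 ∧
    (∀ x y : X, y ∈ locS φ x η → dist (φ x) (φ y) ≤ lam * dist x y) ∧
    (∀ x y : X, y ∈ locU φ x η → dist (φ.symm x) (φ.symm y) ≤ lam * dist x y)

/-- `p` is a periodic point of `φ`. -/
def IsPeriodic (φ : X ≃ₜ X) (p : X) : Prop :=
  ∃ n : ℕ, 1 ≤ n ∧ It φ n p = p

/-- `x` is a synchronizing point: `(x, x)` is in the interior of `D_ε` for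
some `0 < ε ≤ ε₀`. -/
def IsSyncPt (φ : X ≃ₜ X) (ε₀ : ℝ) (x : X) : Prop :=
  ∃ ε : ℝ, 0 < ε ∧ ε ≤ ε₀ ∧ (x, x) ∈ interior (Dset φ ε)

/-- `(X, φ)` is irreducible. -/
def Irred (φ : X ≃ₜ X) : Prop :=
  ∀ U V : Set X, IsOpen U → IsOpen V → U.Nonempty → V.Nonempty →
    ∃ n : ℕ, 0 < n ∧ (It φ n '' U ∩ V).Nonempty

/-- `(X, φ)` is mixing. -/
def Mixing (φ : X ≃ₜ X) : Prop :=
  ∀ U V : Set X, IsOpen U → IsOpen V → U.Nonempty → V.Nonempty →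
    ∃ N : ℕ, ∀ n : ℕ, N ≤ n → (It φ n '' U ∩ V).Nonempty

/-- Every point of `(X, φ)` is non-wandering. -/
def NonWandering (φ : X ≃ₜ X) : Prop :=
  ∀ x : X, ∀ U ∈ 𝓝 x, ∃ n : ℕ, 0 < n ∧ (It φ n '' U ∩ U).Nonempty

/-- Stable equivalence `x ∼ₛ y`. -/
def StableEq (φ : X ≃ₜ X) (x y : X) : Prop :=
  Tendsto (fun n : ℕ => dist (It φ n x) (It φ n y)) atTop (𝓝 0)

/-- Unstable equivalence `x ∼ᵤ y`. -/
def UnstableEq (φ : X ≃ₜ X) (x y : X) : Prop :=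
  Tendsto (fun n : ℕ => dist (It φ (-(n : ℤ)) x) (It φ (-(n : ℤ)) y)) atTop (𝓝 0)

/-- Local conjugacy `x ∼_lc y`: a homeomorphism `γ : U → V` of open
neighborhoods with `γ x = y` and `sup_{z ∈ U} d(φⁿ z, φⁿ (γ z)) → 0` as
`n → ±∞`. -/
def LocConj (φ : X ≃ₜ X) (x y : X) : Prop :=
  ∃ (U V : Set X) (γ γinv : X → X),
    IsOpen U ∧ IsOpen V ∧ x ∈ U ∧ y ∈ V ∧ γ x = y ∧
    Set.MapsTo γ U V ∧ Set.MapsTo γinv V U ∧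
    (∀ z ∈ U, γinv (γ z) = z) ∧ (∀ w ∈ V, γ (γinv w) = w) ∧
    ContinuousOn γ U ∧ ContinuousOn γinv V ∧
    (∀ ε : ℝ, 0 < ε → ∃ N : ℕ, ∀ n : ℤ, (N : ℤ) ≤ |n| → ∀ z ∈ U,
      dist (It φ n z) (It φ n (γ z)) ≤ ε)

/-- Stable local conjugacy `x ∼_lcs y`: a homeomorphism of `Xᵘ(x, δ)` onto
its image in `Xᵘ(y, δ')` sending `x` to `y`, uniformly asymptotic in forward
time. -/
def StableLC (φ : X ≃ₜ X) (x y : X) : Prop :=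
  ∃ (δ δ' : ℝ) (γ : X → X), 0 < δ ∧ 0 < δ' ∧
    Set.MapsTo γ (locU φ x δ) (locU φ y δ') ∧
    Set.InjOn γ (locU φ x δ) ∧ ContinuousOn γ (locU φ x δ) ∧ γ x = y ∧
    (∀ ε : ℝ, 0 < ε → ∃ N : ℕ, ∀ n : ℕ, N ≤ n → ∀ z ∈ locU φ x δ,
      dist (It φ n z) (It φ n (γ z)) ≤ ε)

/-- Unstable local conjugacy `x ∼_lcu y`: a homeomorphism of `Xˢ(x, δ)` onto
its image in `Xˢ(y, δ')` sending `x` to `y`, uniformly asymptotic in backward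
time. -/
def UnstableLC (φ : X ≃ₜ X) (x y : X) : Prop :=
  ∃ (δ δ' : ℝ) (γ : X → X), 0 < δ ∧ 0 < δ' ∧
    Set.MapsTo γ (locS φ x δ) (locS φ y δ') ∧
    Set.InjOn γ (locS φ x δ) ∧ ContinuousOn γ (locS φ x δ) ∧ γ x = y ∧
    (∀ ε : ℝ, 0 < ε → ∃ N : ℕ, ∀ n : ℕ, N ≤ n → ∀ z ∈ locS φ x δ,
      dist (It φ (-(n : ℤ)) z) (It φ (-(n : ℤ)) (γ z)) ≤ ε)

/-! ### Auxiliary lemmas -/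

lemma It_add (φ : X ≃ₜ X) (a b : ℤ) (z : X) :
    It φ a (It φ b z) = It φ (a + b) z := by
  simp only [It, ← Equiv.Perm.mul_apply, ← zpow_add]

lemma It_congr (φ : X ≃ₜ X) {a b : ℤ} (h : a = b) (z : X) :
    It φ a z = It φ b z := by rw [h]

lemma It_zero (φ : X ≃ₜ X) (z : X) : It φ 0 z = z := by simp [It]

lemma It_one (φ : X ≃ₜ X) (z : X) : It φ 1 z = φ z := by simp [It]

lemma It_neg_one (φ : X ≃ₜ X) (z : X) : It φ (-1) z = φ.symm z := by
  simp only [It, zpow_neg, zpow_one]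
  rfl

lemma It_symm (φ : X ≃ₜ X) (j : ℤ) (z : X) : It φ.symm j z = It φ (-j) z := by
  have h : φ.symm.toEquiv = (φ.toEquiv)⁻¹ := rfl
  simp only [It, h, inv_zpow']

lemma continuous_It (φ : X ≃ₜ X) (j : ℤ) : Continuous (It φ j) := by
  have hnat : ∀ m : ℕ, Continuous (It φ (m : ℤ)) := by
    intro m
    induction m with
    | zero =>
      have : It φ ((0 : ℕ) : ℤ) = fun z => z := funext fun z => by simpa using It_zero φ z
      rw [this]; exact continuous_id
    | succ m ih =>
      have : It φ ((m + 1 : ℕ) : ℤ) = fun z => φ (It φ (m : ℤ) z) := by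
        funext z
        rw [← It_one φ (It φ (m : ℤ) z), It_add]
        exact It_congr φ (by push_cast; ring) z
      rw [this]; exact φ.continuous.comp ih
  obtain ⟨t, rfl | rfl⟩ := Int.eq_nat_or_neg j
  · exact hnat t
  · induction t with
    | zero =>
      have : It φ (-((0 : ℕ) : ℤ)) = fun z => z := funext fun z => by simpa using It_zero φ z
      rw [this]; exact continuous_id
    | succ t ih =>
      have : It φ (-((t + 1 : ℕ) : ℤ)) = fun z => φ.symm (It φ (-(t : ℤ)) z) := by
        funext z
        rw [← It_neg_one φ (It φ (-(t : ℤ)) z), It_add]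
        exact It_congr φ (by push_cast; ring) z
      rw [this]; exact φ.symm.continuous.comp ih

lemma locS_mono {φ : X ≃ₜ X} {u w : X} {ε ε' : ℝ} (h : w ∈ locS φ u ε) (hle : ε ≤ ε') :
    w ∈ locS φ u ε' := fun j => (h j).trans hle

lemma locU_mono {φ : X ≃ₜ X} {u w : X} {ε ε' : ℝ} (h : w ∈ locU φ u ε) (hle : ε ≤ ε') :
    w ∈ locU φ u ε' := fun j => (h j).trans hle

lemma locS_self {φ : X ≃ₜ X} {ε : ℝ} (hε : 0 ≤ ε) (u : X) : u ∈ locS φ u ε :=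
  fun _ => by simp [dist_self, hε]

lemma locU_self {φ : X ≃ₜ X} {ε : ℝ} (hε : 0 ≤ ε) (u : X) : u ∈ locU φ u ε :=
  fun _ => by simp [dist_self, hε]

lemma locS_symm (φ : X ≃ₜ X) (u : X) (ε : ℝ) : locS φ.symm u ε = locU φ u ε := by
  ext z; simp only [locS, locU, mem_setOf_eq, It_symm]

lemma locU_symm (φ : X ≃ₜ X) (u : X) (ε : ℝ) : locU φ.symm u ε = locS φ u ε := by
  ext z; simp only [locS, locU, mem_setOf_eq, It_symm, neg_neg]

lemma locS_shift {φ : X ≃ₜ X} {u w : X} {ε : ℝ} (h : w ∈ locS φ u ε) (m : ℕ) :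
    It φ (m : ℤ) w ∈ locS φ (It φ (m : ℤ) u) ε := by
  intro j
  rw [It_add, It_add]
  have h2 := h (j + m)
  have e : ((j + m : ℕ) : ℤ) = (j : ℤ) + (m : ℤ) := by push_cast; ring
  rwa [e] at h2

lemma locU_shift {φ : X ≃ₜ X} {u w : X} {ε : ℝ} (h : w ∈ locU φ u ε) (m : ℕ) :
    It φ (-(m : ℤ)) w ∈ locU φ (It φ (-(m : ℤ)) u) ε := by
  intro j
  rw [It_add, It_add]
  have h2 := h (j + m)
  have e : -((j + m : ℕ) : ℤ) = -(j : ℤ) + -(m : ℤ) := by push_cast; ring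
  rwa [e] at h2

lemma locS_contract {φ : X ≃ₜ X} {η lam : ℝ} (had : IsAdapted φ η lam) {ε : ℝ}
    (hεη : ε ≤ η) {u w : X} (h : w ∈ locS φ u ε) (m : ℕ) :
    dist (It φ (m : ℤ) u) (It φ (m : ℤ) w) ≤ lam ^ m * dist u w := by
  induction m with
  | zero => simp [It_zero]
  | succ m ih =>
    have hm : It φ (m : ℤ) w ∈ locS φ (It φ (m : ℤ) u) η := locS_mono (locS_shift h m) hεη
    have hstep := had.2.2.2.1 _ _ hm
    have e1 : φ (It φ (m : ℤ) u) = It φ ((m + 1 : ℕ) : ℤ) u := by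
      rw [← It_one φ, It_add]; exact It_congr φ (by push_cast; ring) u
    have e2 : φ (It φ (m : ℤ) w) = It φ ((m + 1 : ℕ) : ℤ) w := by
      rw [← It_one φ, It_add]; exact It_congr φ (by push_cast; ring) w
    calc dist (It φ ((m + 1 : ℕ) : ℤ) u) (It φ ((m + 1 : ℕ) : ℤ) w)
        = dist (φ (It φ (m : ℤ) u)) (φ (It φ (m : ℤ) w)) := by rw [e1, e2]
      _ ≤ lam * dist (It φ (m : ℤ) u) (It φ (m : ℤ) w) := hstep
      _ ≤ lam * (lam ^ m * dist u w) := mul_le_mul_of_nonneg_left ih had.2.1.le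
      _ = lam ^ (m + 1) * dist u w := by ring

lemma locU_contract {φ : X ≃ₜ X} {η lam : ℝ} (had : IsAdapted φ η lam) {ε : ℝ}
    (hεη : ε ≤ η) {u w : X} (h : w ∈ locU φ u ε) (m : ℕ) :
    dist (It φ (-(m : ℤ)) u) (It φ (-(m : ℤ)) w) ≤ lam ^ m * dist u w := by
  induction m with
  | zero => simp [It_zero]
  | succ m ih =>
    have hm : It φ (-(m : ℤ)) w ∈ locU φ (It φ (-(m : ℤ)) u) η := locU_mono (locU_shift h m) hεη
    have hstep := had.2.2.2.2 _ _ hm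
    have e1 : φ.symm (It φ (-(m : ℤ)) u) = It φ (-((m + 1 : ℕ) : ℤ)) u := by
      rw [← It_neg_one φ, It_add]; exact It_congr φ (by push_cast; ring) u
    have e2 : φ.symm (It φ (-(m : ℤ)) w) = It φ (-((m + 1 : ℕ) : ℤ)) w := by
      rw [← It_neg_one φ, It_add]; exact It_congr φ (by push_cast; ring) w
    calc dist (It φ (-((m + 1 : ℕ) : ℤ)) u) (It φ (-((m + 1 : ℕ) : ℤ)) w)
        = dist (φ.symm (It φ (-(m : ℤ)) u)) (φ.symm (It φ (-(m : ℤ)) w)) := by rw [e1, e2]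
      _ ≤ lam * dist (It φ (-(m : ℤ)) u) (It φ (-(m : ℤ)) w) := hstep
      _ ≤ lam * (lam ^ m * dist u w) := mul_le_mul_of_nonneg_left ih had.2.1.le
      _ = lam ^ (m + 1) * dist u w := by ring

lemma IsAdapted.symm {φ : X ≃ₜ X} {η lam : ℝ} (had : IsAdapted φ η lam) :
    IsAdapted φ.symm η lam := by
  obtain ⟨h1, h2, h3, h4, h5⟩ := had
  refine ⟨h1, h2, h3, ?_, ?_⟩
  · intro a b hb
    rw [locS_symm] at hb
    exact h5 a b hb
  · intro a b hb
    rw [locU_symm] at hb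
    have := h4 a b hb
    simpa [Homeomorph.symm_symm] using this
lemma sum_pow_le {lam : ℝ} (h0 : 0 ≤ lam) (h1 : lam < 1) {n : ℕ} (hn : 1 ≤ n) (K : ℕ) :
    ∑ i ∈ Finset.range K, (lam ^ n) ^ i ≤ 1 / (1 - lam) := by
  have h1l : (0 : ℝ) < 1 - lam := by linarith
  have step : ∀ i ∈ Finset.range K, (lam ^ n) ^ i ≤ lam ^ i := by
    intro i _
    rw [← pow_mul]
    exact pow_le_pow_of_le_one h0 h1.le (Nat.le_mul_of_pos_left i (by omega))
  calc ∑ i ∈ Finset.range K, (lam ^ n) ^ i ≤ ∑ i ∈ Finset.range K, lam ^ i :=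
        Finset.sum_le_sum step
    _ ≤ 1 / (1 - lam) := by
        rw [le_div_iff₀ h1l]
        have hg := geom_sum_mul lam K
        nlinarith [pow_nonneg h0 K]

lemma bracket_unique {φ : X ≃ₜ X} {εX ε : ℝ} (hexp : IsExpansive φ εX)
    (hε2 : 2 * ε ≤ εX) {u v w w' : X}
    (hwS : w ∈ locS φ u ε) (hwU : w ∈ locU φ v ε)
    (hw'S : w' ∈ locS φ u ε) (hw'U : w' ∈ locU φ v ε) : w = w' := by
  apply hexp.2
  intro j
  rcases le_or_gt 0 j with hj | hj
  · have e : ((j.toNat : ℕ) : ℤ) = j := Int.toNat_of_nonneg hj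
    have h1 := hwS j.toNat
    have h2 := hw'S j.toNat
    rw [e] at h1 h2
    calc dist (It φ j w) (It φ j w')
        ≤ dist (It φ j w) (It φ j u) + dist (It φ j u) (It φ j w') := dist_triangle _ _ _
      _ ≤ ε + ε := add_le_add (by rw [dist_comm]; exact h1) h2
      _ ≤ εX := by linarith
  · have e : -(((-j).toNat : ℕ) : ℤ) = j := by
      have := Int.toNat_of_nonneg (by omega : (0:ℤ) ≤ -j); omega
    have h1 := hwU (-j).toNat
    have h2 := hw'U (-j).toNat
    rw [e] at h1 h2
    calc dist (It φ j w) (It φ j w')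
        ≤ dist (It φ j w) (It φ j v) + dist (It φ j v) (It φ j w') := dist_triangle _ _ _
      _ ≤ ε + ε := add_le_add (by rw [dist_comm]; exact h1) h2
      _ ≤ εX := by linarith

lemma bracket_modulus (φ : X ≃ₜ X) {εX ε : ℝ} (hexp : IsExpansive φ εX)
    (hε : 0 < ε) (hε2 : 2 * ε ≤ εX) {ρ : ℝ} (hρ : 0 < ρ) :
    ∃ τ : ℝ, 0 < τ ∧ τ ≤ ρ ∧ ∀ u v w : X, w ∈ locS φ u ε → w ∈ locU φ v ε →
      dist u v ≤ τ → dist u w ≤ ρ ∧ dist v w ≤ ρ := by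
  by_contra hcon
  have h' : ∀ k : ℕ, ∃ u v w : X, w ∈ locS φ u ε ∧ w ∈ locU φ v ε ∧
      dist u v ≤ min ρ (1 / (k + 1)) ∧ ρ - min ρ (1 / (k + 1)) ≤ dist u w := by
    intro k
    have hτpos : 0 < min ρ (1 / (k + 1 : ℝ)) := lt_min hρ (by positivity)
    by_contra hc
    push_neg at hc
    apply hcon
    refine ⟨min ρ (1 / (k + 1)), hτpos, min_le_left _ _, ?_⟩
    intro u v w h1 h2 h3
    have h4 : dist u w < ρ - min ρ (1 / (k + 1)) := hc u v w h1 h2 h3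
    constructor
    · linarith [hτpos.le]
    · have : dist v w ≤ dist v u + dist u w := dist_triangle _ _ _
      rw [dist_comm v u] at this
      linarith
  choose u v w hS hU hduv hduw using h'
  obtain ⟨L, -, ψ, hψ, hlim⟩ := isCompact_univ.tendsto_subseq
    (fun k => mem_univ ((u k, v k, w k) : X × X × X))
  obtain ⟨a, b, c⟩ := L
  have hu : Tendsto (fun k => u (ψ k)) atTop (𝓝 a) :=
    (continuous_fst.tendsto _).comp hlim
  have hv : Tendsto (fun k => v (ψ k)) atTop (𝓝 b) :=
    ((continuous_fst.comp continuous_snd).tendsto _).comp hlim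
  have hw : Tendsto (fun k => w (ψ k)) atTop (𝓝 c) :=
    ((continuous_snd.comp continuous_snd).tendsto _).comp hlim
  have hinv : Tendsto (fun k : ℕ => 1 / ((ψ k : ℝ) + 1)) atTop (𝓝 0) := by
    exact tendsto_one_div_add_atTop_nhds_zero_nat.comp hψ.tendsto_atTop
  have hab : a = b := by
    have hd : Tendsto (fun k => dist (u (ψ k)) (v (ψ k))) atTop (𝓝 (dist a b)) := hu.dist hv
    have hle : dist a b ≤ 0 := by
      apply le_of_tendsto_of_tendsto hd hinv
      filter_upwards with k
      exact (hduv (ψ k)).trans (min_le_right _ _)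
    exact dist_le_zero.mp hle
  have hcS : c ∈ locS φ a ε := by
    intro j
    have hd : Tendsto (fun k => dist (It φ (j:ℤ) (u (ψ k))) (It φ (j:ℤ) (w (ψ k)))) atTop
        (𝓝 (dist (It φ (j:ℤ) a) (It φ (j:ℤ) c))) :=
      (((continuous_It φ (j:ℤ)).tendsto a).comp hu).dist (((continuous_It φ (j:ℤ)).tendsto c).comp hw)
    exact le_of_tendsto hd (Filter.Eventually.of_forall fun k => hS (ψ k) j)
  have hcU : c ∈ locU φ b ε := by
    intro j
    have hd : Tendsto (fun k => dist (It φ (-(j:ℤ)) (v (ψ k))) (It φ (-(j:ℤ)) (w (ψ k)))) atTop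
        (𝓝 (dist (It φ (-(j:ℤ)) b) (It φ (-(j:ℤ)) c))) :=
      (((continuous_It φ (-(j:ℤ))).tendsto b).comp hv).dist
        (((continuous_It φ (-(j:ℤ))).tendsto c).comp hw)
    exact le_of_tendsto hd (Filter.Eventually.of_forall fun k => hU (ψ k) j)
  have hρac : ρ ≤ dist a c := by
    have hd : Tendsto (fun k => dist (u (ψ k)) (w (ψ k))) atTop (𝓝 (dist a c)) := hu.dist hw
    have hlo : Tendsto (fun k : ℕ => ρ - 1 / ((ψ k : ℝ) + 1)) atTop (𝓝 (ρ - 0)) :=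
      tendsto_const_nhds.sub hinv
    rw [sub_zero] at hlo
    apply le_of_tendsto_of_tendsto hlo hd
    filter_upwards with k
    have : ρ - min ρ (1 / ((ψ k : ℝ) + 1)) ≤ dist (u (ψ k)) (w (ψ k)) := hduw (ψ k)
    have hm : min ρ (1 / ((ψ k : ℝ) + 1)) ≤ 1 / ((ψ k : ℝ) + 1) := min_le_right _ _
    linarith
  have hceq : c = a := by
    subst hab
    exact bracket_unique hexp hε2 hcS hcU (locS_self hε.le a) (locU_self hε.le a)
  rw [hceq, dist_self] at hρac
  linarith
lemma nw_large {φ : X ≃ₜ X} (hnw : NonWandering φ) (x : X) {δ : ℝ} (hδ : 0 < δ) (N : ℕ) :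
    ∃ n : ℕ, N ≤ n ∧ 1 ≤ n ∧ ∃ y, dist y x < δ ∧ dist (It φ (n : ℤ) y) x < δ := by
  have aux : ∀ M : ℕ, ∃ n : ℕ, M ≤ n ∧ 1 ≤ n ∧ ∃ W : Set X, IsOpen W ∧ W.Nonempty ∧
      W ⊆ Metric.ball x δ ∧ ∀ z ∈ W, It φ (n : ℤ) z ∈ Metric.ball x δ := by
    intro M
    induction M with
    | zero =>
      obtain ⟨n, hn, z, hz1, hz2⟩ := hnw x (Metric.ball x δ) (Metric.ball_mem_nhds x hδ)
      obtain ⟨y0, hy0, rfl⟩ := hz1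
      refine ⟨n, Nat.zero_le n, hn, Metric.ball x δ ∩ (It φ (n : ℤ)) ⁻¹' (Metric.ball x δ),
        Metric.isOpen_ball.inter (Metric.isOpen_ball.preimage (continuous_It φ (n : ℤ))),
        ⟨y0, hy0, hz2⟩, inter_subset_left, fun z hz => hz.2⟩
    | succ M ih =>
      obtain ⟨n, hMn, hn1, W, hWo, ⟨w0, hw0⟩, hWb, hWim⟩ := ih
      obtain ⟨m, hm, z, hz1, hz2⟩ := hnw w0 W (hWo.mem_nhds hw0)
      obtain ⟨u0, hu0, rfl⟩ := hz1
      refine ⟨n + m, by omega, by omega, W ∩ (It φ (m : ℤ)) ⁻¹' W,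
        hWo.inter (hWo.preimage (continuous_It φ (m : ℤ))),
        ⟨u0, hu0, hz2⟩, fun z hz => hWb hz.1, ?_⟩
      intro z hz
      have h1 : It φ (m : ℤ) z ∈ W := hz.2
      have h2 := hWim _ h1
      rw [It_add] at h2
      have e : ((n : ℤ) + (m : ℤ)) = ((n + m : ℕ) : ℤ) := by push_cast; ring
      rwa [e] at h2
  obtain ⟨n, hMn, hn1, W, hWo, ⟨y, hy⟩, hWb, hWim⟩ := aux N
  exact ⟨n, hMn, hn1, y, hWb hy, hWim y hy⟩
lemma onesided (φ : X ≃ₜ X) (η lam ε δ₁ ρ τ δ₀ : ℝ) (x y : X) (n : ℕ)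
    (had : IsAdapted φ η lam) (hεη : ε ≤ η)
    (hbr : ∀ u v : X, dist u x < δ₁ → dist v x < δ₁ →
      ∃ w, w ∈ locS φ u ε ∧ w ∈ locU φ v ε)
    (hmod : ∀ u v w : X, w ∈ locS φ u ε → w ∈ locU φ v ε → dist u v ≤ τ →
      dist u w ≤ ρ ∧ dist v w ≤ ρ)
    (hρ : 0 < ρ) (hρη : ρ ≤ η)
    (hn : 1 ≤ n) (hy : dist y x < δ₀) (hyn : dist (It φ (n : ℤ) y) x < δ₀)
    (hτ1 : 2 * δ₀ + lam ^ n * ρ ≤ τ) (hδδ : δ₀ + lam ^ n * ρ ≤ δ₁) (hδ01 : δ₀ ≤ δ₁) :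
    ∃ p, p ∈ locS φ y ρ ∧ ∀ k m : ℕ, m ≤ n →
      dist (It φ (-((k * n + m : ℕ) : ℤ)) p) (It φ ((n : ℤ) - (m : ℤ)) y) ≤
        ρ * lam ^ (n - m) + ρ * lam ^ m * ∑ i ∈ Finset.range (k + 1), (lam ^ n) ^ i := by
  have hlam0 : 0 < lam := had.2.1
  have hlam1 : lam < 1 := had.2.2.1
  have hpow1 : ∀ j : ℕ, lam ^ j ≤ 1 := fun j => pow_le_one₀ hlam0.le hlam1.le
  -- the inductive construction
  have key : ∀ K : ℕ, ∃ s : X, s ∈ locS φ y ρ ∧ ∀ k m : ℕ, k < K → m ≤ n →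
      dist (It φ (-((k * n + m : ℕ) : ℤ)) s) (It φ ((n : ℤ) - (m : ℤ)) y) ≤
        ρ * lam ^ (n - m) + ρ * lam ^ m * ∑ i ∈ Finset.range (k + 1), (lam ^ n) ^ i := by
    intro K
    induction K with
    | zero => exact ⟨y, locS_self hρ.le y, fun k m hk _ => absurd hk (Nat.not_lt_zero k)⟩
    | succ K ih =>
      obtain ⟨s, hsS, hsSH⟩ := ih
      have hds : dist y s ≤ ρ := by
        have h0 := hsS 0
        simpa [It_zero] using h0
      have hcon : dist (It φ (n : ℤ) y) (It φ (n : ℤ) s) ≤ lam ^ n * ρ := by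
        have := locS_contract had hρη hsS n
        calc dist (It φ (n : ℤ) y) (It φ (n : ℤ) s) ≤ lam ^ n * dist y s := this
          _ ≤ lam ^ n * ρ := mul_le_mul_of_nonneg_left hds (pow_nonneg hlam0.le n)
      have h1 : dist (It φ (n : ℤ) s) x < δ₁ := by
        calc dist (It φ (n : ℤ) s) x
            ≤ dist (It φ (n : ℤ) s) (It φ (n : ℤ) y) + dist (It φ (n : ℤ) y) x :=
              dist_triangle _ _ _
          _ < lam ^ n * ρ + δ₀ := by
              rw [dist_comm]
              exact add_lt_add_of_le_of_lt hcon hyn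
          _ ≤ δ₁ := by linarith
      obtain ⟨w, hwS, hwU⟩ := hbr y (It φ (n : ℤ) s) (lt_of_lt_of_le hy hδ01) h1
      have hdyv : dist y (It φ (n : ℤ) s) ≤ τ := by
        calc dist y (It φ (n : ℤ) s)
            ≤ dist y x + dist x (It φ (n : ℤ) y) + dist (It φ (n : ℤ) y) (It φ (n : ℤ) s) :=
              dist_triangle4 _ _ _ _
          _ ≤ δ₀ + δ₀ + lam ^ n * ρ := by
              rw [dist_comm x]
              exact add_le_add (add_le_add hy.le hyn.le) hcon
          _ ≤ τ := by linarith
      obtain ⟨hd1, hd2⟩ := hmod y (It φ (n : ℤ) s) w hwS hwU hdyv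
      refine ⟨w, ?_, ?_⟩
      · intro j
        have := locS_contract had hεη hwS j
        calc dist (It φ (j : ℤ) y) (It φ (j : ℤ) w) ≤ lam ^ j * dist y w := this
          _ ≤ 1 * ρ := mul_le_mul (hpow1 j) hd1 dist_nonneg zero_le_one
          _ = ρ := one_mul ρ
      · intro k m hk hm
        -- general backward estimate against the orbit of s
        have est1 : ∀ j : ℕ, dist (It φ ((n : ℤ) - (j : ℤ)) s) (It φ (-(j : ℤ)) w) ≤
            lam ^ j * ρ := by
          intro j
          have h := locU_contract had hεη hwU j
          rw [It_add] at h
          have e : (-(j : ℤ) + (n : ℤ)) = ((n : ℤ) - (j : ℤ)) := by ring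
          rw [e] at h
          calc dist (It φ ((n : ℤ) - (j : ℤ)) s) (It φ (-(j : ℤ)) w)
              ≤ lam ^ j * dist (It φ (n : ℤ) s) w := h
            _ ≤ lam ^ j * ρ := mul_le_mul_of_nonneg_left hd2 (pow_nonneg hlam0.le j)
        match k with
        | 0 =>
          have e0 : ((0 * n + m : ℕ) : ℤ) = (m : ℤ) := by push_cast; ring
          have h1' := est1 m
          have est2 : dist (It φ ((n : ℤ) - (m : ℤ)) y) (It φ ((n : ℤ) - (m : ℤ)) s) ≤
              lam ^ (n - m) * ρ := by
            have h := locS_contract had hρη hsS (n - m)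
            have e : (((n - m : ℕ)) : ℤ) = (n : ℤ) - (m : ℤ) := by
              rw [Nat.cast_sub hm]
            rw [e] at h
            calc dist (It φ ((n : ℤ) - (m : ℤ)) y) (It φ ((n : ℤ) - (m : ℤ)) s)
                ≤ lam ^ (n - m) * dist y s := h
              _ ≤ lam ^ (n - m) * ρ := mul_le_mul_of_nonneg_left hds (pow_nonneg hlam0.le _)
          rw [It_congr φ (by rw [e0] : -((0 * n + m : ℕ) : ℤ) = -(m : ℤ)) w]
          calc dist (It φ (-(m : ℤ)) w) (It φ ((n : ℤ) - (m : ℤ)) y)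
              ≤ dist (It φ (-(m : ℤ)) w) (It φ ((n : ℤ) - (m : ℤ)) s) +
                dist (It φ ((n : ℤ) - (m : ℤ)) s) (It φ ((n : ℤ) - (m : ℤ)) y) :=
                dist_triangle _ _ _
            _ ≤ lam ^ m * ρ + lam ^ (n - m) * ρ :=
                add_le_add (by rw [dist_comm]; exact h1') (by rw [dist_comm]; exact est2)
            _ = ρ * lam ^ (n - m) + ρ * lam ^ m * ∑ i ∈ Finset.range (0 + 1), (lam ^ n) ^ i := by
                simp [Finset.sum_range_one]
                ring
        | (k' + 1) =>
          have hk' : k' < K := by omega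
          have ihk := hsSH k' m hk' hm
          have h1' := est1 ((k' + 1) * n + m)
          have e : ((n : ℤ) - (((k' + 1) * n + m : ℕ) : ℤ)) = -(((k' * n + m : ℕ)) : ℤ) := by
            push_cast; ring
          rw [e] at h1'
          have epow : lam ^ ((k' + 1) * n + m) = lam ^ m * (lam ^ n) ^ (k' + 1) := by
            rw [pow_add, mul_comm (k' + 1) n, pow_mul, mul_comm]
          calc dist (It φ (-(((k' + 1) * n + m : ℕ) : ℤ)) w) (It φ ((n : ℤ) - (m : ℤ)) y)
              ≤ dist (It φ (-(((k' + 1) * n + m : ℕ) : ℤ)) w)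
                  (It φ (-((k' * n + m : ℕ) : ℤ)) s) +
                dist (It φ (-((k' * n + m : ℕ) : ℤ)) s) (It φ ((n : ℤ) - (m : ℤ)) y) :=
                dist_triangle _ _ _
            _ ≤ lam ^ ((k' + 1) * n + m) * ρ +
                (ρ * lam ^ (n - m) + ρ * lam ^ m * ∑ i ∈ Finset.range (k' + 1), (lam ^ n) ^ i) := by
                rw [dist_comm (It φ (-(((k' + 1) * n + m : ℕ) : ℤ)) w)]
                exact add_le_add h1' ihk
            _ = ρ * lam ^ (n - m) + ρ * lam ^ m *
                  ∑ i ∈ Finset.range (k' + 1 + 1), (lam ^ n) ^ i := by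
                have esum : ∑ i ∈ Finset.range (k' + 1 + 1), (lam ^ n) ^ i =
                    (∑ i ∈ Finset.range (k' + 1), (lam ^ n) ^ i) + (lam ^ n) ^ (k' + 1) :=
                  Finset.sum_range_succ _ _
                rw [esum, epow]; ring
  -- pass to a limit point
  set S : ℕ → X := fun K => (key K).choose with hSdef
  have hSprop : ∀ K, S K ∈ locS φ y ρ ∧ ∀ k m : ℕ, k < K → m ≤ n →
      dist (It φ (-((k * n + m : ℕ) : ℤ)) (S K)) (It φ ((n : ℤ) - (m : ℤ)) y) ≤
        ρ * lam ^ (n - m) + ρ * lam ^ m * ∑ i ∈ Finset.range (k + 1), (lam ^ n) ^ i :=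
    fun K => (key K).choose_spec
  obtain ⟨p, -, ψ, hψ, hlim⟩ := isCompact_univ.tendsto_subseq (fun K => mem_univ (S K))
  refine ⟨p, ?_, ?_⟩
  · intro j
    have hd : Tendsto (fun K => dist (It φ (j : ℤ) y) (It φ (j : ℤ) (S (ψ K)))) atTop
        (𝓝 (dist (It φ (j : ℤ) y) (It φ (j : ℤ) p))) :=
      tendsto_const_nhds.dist (((continuous_It φ (j : ℤ)).tendsto p).comp hlim)
    exact le_of_tendsto hd (Filter.Eventually.of_forall fun K => (hSprop (ψ K)).1 j)
  · intro k m hm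
    have hd : Tendsto
        (fun K => dist (It φ (-((k * n + m : ℕ) : ℤ)) (S (ψ K))) (It φ ((n : ℤ) - (m : ℤ)) y))
        atTop (𝓝 (dist (It φ (-((k * n + m : ℕ) : ℤ)) p) (It φ ((n : ℤ) - (m : ℤ)) y))) :=
      (((continuous_It φ _).tendsto p).comp hlim).dist tendsto_const_nhds
    apply le_of_tendsto hd
    rw [Filter.eventually_atTop]
    refine ⟨k + 1, fun K hK => ?_⟩
    have hKψ : K ≤ ψ K := hψ.le_apply
    exact (hSprop (ψ K)).2 k m (by omega) hm
/-- in a non-wandering expansive system, every neighborhood of a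
synchronizing point contains a periodic point. -/
theorem periodic_near_syncPt (φ : X ≃ₜ X) (εX η lam : ℝ)
    (hexp : IsExpansive φ εX) (had : IsAdapted φ η lam)
    (hnw : NonWandering φ) (x : X) (hx : IsSyncPt φ (min η (εX / 2)) x) :
    ∀ U ∈ 𝓝 x, ∃ p ∈ U, IsPeriodic φ p := by
  intro U hU
  have hlam0 : 0 < lam := had.2.1
  have hlam1 : lam < 1 := had.2.2.1
  have hη0 : 0 < η := had.1
  have h1l : (0 : ℝ) < 1 - lam := by linarith
  have hεX0 : 0 < εX := hexp.1
  set C : ℝ := 1 + 1 / (1 - lam) with hCdef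
  have hC1 : 1 ≤ C := by
    have : 0 < 1 / (1 - lam) := by positivity
    simp only [hCdef]; linarith
  have hC0 : 0 < C := by linarith
  obtain ⟨r, hr0, hrU⟩ := Metric.mem_nhds_iff.mp hU
  obtain ⟨ε, hε0, hεle, hint⟩ := hx
  have hεη : ε ≤ η := hεle.trans (min_le_left _ _)
  have hε2 : 2 * ε ≤ εX := by
    have := hεle.trans (min_le_right _ _); linarith
  obtain ⟨δ₁, hδ₁0, hball⟩ := Metric.mem_nhds_iff.mp (mem_interior_iff_mem_nhds.mp hint)
  have hbr : ∀ u v : X, dist u x < δ₁ → dist v x < δ₁ →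
      ∃ w, w ∈ locS φ u ε ∧ w ∈ locU φ v ε := by
    intro u v hu hv
    have hmem : ((u, v) : X × X) ∈ Metric.ball (x, x) δ₁ := by
      rw [Metric.mem_ball, Prod.dist_eq]
      exact max_lt hu hv
    obtain ⟨w, hw1, hw2⟩ := hball hmem
    exact ⟨w, hw1, hw2⟩
  -- scales
  set ρ' : ℝ := min (min (r / 4) (εX / 8)) (min ε (δ₁ / 4)) with hρ'def
  have hρ'0 : 0 < ρ' := by
    apply lt_min (lt_min (by linarith) (by linarith)) (lt_min hε0 (by linarith))
  have hρ'r : ρ' ≤ r / 4 := (min_le_left _ _).trans (min_le_left _ _)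
  have hρ'εX : ρ' ≤ εX / 8 := (min_le_left _ _).trans (min_le_right _ _)
  have hρ'ε : ρ' ≤ ε := (min_le_right _ _).trans (min_le_left _ _)
  have hρ'δ₁ : ρ' ≤ δ₁ / 4 := (min_le_right _ _).trans (min_le_right _ _)
  obtain ⟨τ', hτ'0, hτ'ρ, hmod'⟩ := bracket_modulus φ hexp hε0 hε2 hρ'0
  set ρ : ℝ := min (ρ' / C) (τ' / 8) with hρdef
  have hρ0 : 0 < ρ := lt_min (by positivity) (by linarith)
  have hρρ' : ρ ≤ ρ' := (min_le_left _ _).trans (div_le_self hρ'0.le hC1)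
  have hρC : ρ * C ≤ ρ' := by
    have h := min_le_left (ρ' / C) (τ' / 8)
    calc ρ * C ≤ (ρ' / C) * C := mul_le_mul_of_nonneg_right h hC0.le
      _ = ρ' := by field_simp
  have hρτ' : ρ ≤ τ' / 8 := min_le_right _ _
  have hρη : ρ ≤ η := hρρ'.trans (hρ'ε.trans hεη)
  obtain ⟨τ₀, hτ₀0, hτ₀ρ, hmod₀⟩ := bracket_modulus φ hexp hε0 hε2 hρ0
  set δ₀ : ℝ := min (min (τ₀ / 4) (τ' / 8)) (min (δ₁ / 4) (r / 4)) with hδ₀def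
  have hδ₀0 : 0 < δ₀ :=
    lt_min (lt_min (by linarith) (by linarith)) (lt_min (by linarith) (by linarith))
  have hδ₀τ₀ : δ₀ ≤ τ₀ / 4 := (min_le_left _ _).trans (min_le_left _ _)
  have hδ₀τ' : δ₀ ≤ τ' / 8 := (min_le_left _ _).trans (min_le_right _ _)
  have hδ₀δ₁ : δ₀ ≤ δ₁ / 4 := (min_le_right _ _).trans (min_le_left _ _)
  have hδ₀r : δ₀ ≤ r / 4 := (min_le_right _ _).trans (min_le_right _ _)
  have hδ₀ρ' : δ₀ ≤ ρ' := by
    calc δ₀ ≤ τ₀ / 4 := hδ₀τ₀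
      _ ≤ ρ := by linarith
      _ ≤ ρ' := hρρ'
  -- choose a long return time
  obtain ⟨N, hN⟩ := exists_pow_lt_of_lt_one (show (0:ℝ) < τ₀ / (2 * ρ) by positivity) hlam1
  obtain ⟨n, hNn, hn1, y, hy, hyn⟩ := nw_large hnw x hδ₀0 N
  have hlamn : lam ^ n * ρ ≤ τ₀ / 2 := by
    have h1 : lam ^ n ≤ lam ^ N := pow_le_pow_of_le_one hlam0.le hlam1.le hNn
    have h2 : lam ^ n < τ₀ / (2 * ρ) := lt_of_le_of_lt h1 hN
    calc lam ^ n * ρ ≤ (τ₀ / (2 * ρ)) * ρ := mul_le_mul_of_nonneg_right h2.le hρ0.le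
      _ = τ₀ / 2 := by field_simp
  have hτ1 : 2 * δ₀ + lam ^ n * ρ ≤ τ₀ := by linarith
  have hδδ : δ₀ + lam ^ n * ρ ≤ δ₁ := by
    have : lam ^ n * ρ ≤ ρ' := by linarith [hτ₀ρ, hρρ']
    linarith
  have hδ01 : δ₀ ≤ δ₁ := by linarith
  -- backward one-sided point p
  obtain ⟨p, hpS, hpSH⟩ := onesided φ η lam ε δ₁ ρ τ₀ δ₀ x y n had hεη hbr hmod₀ hρ0 hρη
    hn1 hy hyn hτ1 hδδ hδ01
  -- forward one-sided point p' (via the reversed system)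
  have hbrs : ∀ u v : X, dist u x < δ₁ → dist v x < δ₁ →
      ∃ w, w ∈ locS φ.symm u ε ∧ w ∈ locU φ.symm v ε := by
    intro u v hu hv
    obtain ⟨w, h1, h2⟩ := hbr v u hv hu
    exact ⟨w, by rwa [locS_symm], by rwa [locU_symm]⟩
  have hmods : ∀ u v w : X, w ∈ locS φ.symm u ε → w ∈ locU φ.symm v ε → dist u v ≤ τ₀ →
      dist u w ≤ ρ ∧ dist v w ≤ ρ := by
    intro u v w h1 h2 h3
    rw [locS_symm] at h1
    rw [locU_symm] at h2
    have := hmod₀ v u w h2 h1 (by rwa [dist_comm])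
    exact ⟨this.2, this.1⟩
  have hyn' : dist (It φ.symm (n : ℤ) (It φ (n : ℤ) y)) x < δ₀ := by
    rw [It_symm, It_add]
    have e : (-(n : ℤ) + (n : ℤ)) = 0 := by ring
    rw [It_congr φ e, It_zero]
    exact hy
  obtain ⟨p', hp'S, hp'SH⟩ := onesided φ.symm η lam ε δ₁ ρ τ₀ δ₀ x (It φ (n : ℤ) y) n
    had.symm hεη hbrs hmods hρ0 hρη hn1 hyn hyn' hτ1 hδδ hδ01
  have hp'U : p' ∈ locU φ (It φ (n : ℤ) y) ρ := by rwa [locS_symm] at hp'S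
  have hp'SH' : ∀ k m : ℕ, m ≤ n →
      dist (It φ ((k * n + m : ℕ) : ℤ) p') (It φ (m : ℤ) y) ≤
        ρ * lam ^ (n - m) + ρ * lam ^ m * ∑ i ∈ Finset.range (k + 1), (lam ^ n) ^ i := by
    intro k m hm
    have h := hp'SH k m hm
    rw [It_symm, neg_neg, It_symm, It_add] at h
    have e : (-((n : ℤ) - (m : ℤ)) + (n : ℤ)) = (m : ℤ) := by ring
    rwa [It_congr φ e] at h
  -- base distances
  have hdyp : dist y p ≤ ρ := by
    have h0 := hpS 0
    simpa [It_zero] using h0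
  have hdp'y : dist (It φ (n : ℤ) y) p' ≤ ρ := by
    have h0 := hp'U 0
    have e : -((0 : ℕ) : ℤ) = 0 := by norm_num
    rw [e, It_zero, It_zero] at h0
    exact h0
  have hdny : dist (It φ (n : ℤ) y) y ≤ 2 * δ₀ := by
    calc dist (It φ (n : ℤ) y) y ≤ dist (It φ (n : ℤ) y) x + dist x y := dist_triangle _ _ _
      _ ≤ 2 * δ₀ := by rw [dist_comm x y]; linarith
  have hpx : dist p x < δ₁ := by
    calc dist p x ≤ dist p y + dist y x := dist_triangle _ _ _
      _ < ρ + δ₀ := add_lt_add_of_le_of_lt (by rwa [dist_comm]) hy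
      _ ≤ δ₁ := by linarith [hρρ', hρ'δ₁]
  have hp'x : dist p' x < δ₁ := by
    calc dist p' x ≤ dist p' (It φ (n : ℤ) y) + dist (It φ (n : ℤ) y) x := dist_triangle _ _ _
      _ < ρ + δ₀ := add_lt_add_of_le_of_lt (by rwa [dist_comm]) hyn
      _ ≤ δ₁ := by linarith [hρρ', hρ'δ₁]
  obtain ⟨w, hwS, hwU⟩ := hbr p' p hp'x hpx
  have hdpp' : dist p' p ≤ τ' := by
    calc dist p' p ≤ dist p' (It φ (n : ℤ) y) + dist (It φ (n : ℤ) y) y + dist y p :=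
          dist_triangle4 _ _ _ _
      _ ≤ ρ + 2 * δ₀ + ρ := add_le_add (add_le_add (by rwa [dist_comm]) hdny) hdyp
      _ ≤ τ' := by linarith
  obtain ⟨hd1', hd2'⟩ := hmod' p' p w hwS hwU hdpp'
  -- uniform bound on the shadowing estimates
  have hboundC : ∀ k m : ℕ, m ≤ n →
      ρ * lam ^ (n - m) + ρ * lam ^ m * ∑ i ∈ Finset.range (k + 1), (lam ^ n) ^ i ≤ ρ * C := by
    intro k m _
    have hs := sum_pow_le hlam0.le hlam1 hn1 (k + 1)
    have hs0 : (0:ℝ) ≤ ∑ i ∈ Finset.range (k + 1), (lam ^ n) ^ i :=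
      Finset.sum_nonneg fun i _ => pow_nonneg (pow_nonneg hlam0.le n) i
    have hp1 : lam ^ (n - m) ≤ 1 := pow_le_one₀ hlam0.le hlam1.le
    have hp2 : lam ^ m ≤ 1 := pow_le_one₀ hlam0.le hlam1.le
    have hpm0 : (0:ℝ) ≤ lam ^ m := pow_nonneg hlam0.le m
    have h1 : ρ * lam ^ (n - m) ≤ ρ * 1 := mul_le_mul_of_nonneg_left hp1 hρ0.le
    have h2 : ρ * lam ^ m * ∑ i ∈ Finset.range (k + 1), (lam ^ n) ^ i ≤
        ρ * (1 / (1 - lam)) := by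
      calc ρ * lam ^ m * ∑ i ∈ Finset.range (k + 1), (lam ^ n) ^ i
          ≤ ρ * 1 * (1 / (1 - lam)) := by
            apply mul_le_mul _ hs hs0 (by linarith)
            exact mul_le_mul_of_nonneg_left hp2 hρ0.le
        _ = ρ * (1 / (1 - lam)) := by ring
    calc ρ * lam ^ (n - m) + ρ * lam ^ m * ∑ i ∈ Finset.range (k + 1), (lam ^ n) ^ i
        ≤ ρ * 1 + ρ * (1 / (1 - lam)) := add_le_add h1 h2
      _ = ρ * C := by rw [hCdef]; ring
  set R : ℝ := ρ' + ρ * C with hRdef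
  have hR2 : R ≤ 2 * ρ' := by simp only [hRdef]; linarith
  -- forward shadowing of w
  have Fwd : ∀ t : ℕ, dist (It φ (t : ℤ) w) (It φ ((t % n : ℕ) : ℤ) y) ≤ R := by
    intro t
    have e1 : dist (It φ (t : ℤ) p') (It φ (t : ℤ) w) ≤ ρ' := by
      have h := locS_contract had hεη hwS t
      calc dist (It φ (t : ℤ) p') (It φ (t : ℤ) w) ≤ lam ^ t * dist p' w := h
        _ ≤ 1 * ρ' := mul_le_mul (pow_le_one₀ hlam0.le hlam1.le) hd1' dist_nonneg zero_le_one
        _ = ρ' := one_mul _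
    have e2 := hp'SH' (t / n) (t % n) (Nat.mod_lt t (by omega)).le
    have et : t / n * n + t % n = t := by rw [mul_comm]; exact Nat.div_add_mod t n
    rw [et] at e2
    calc dist (It φ (t : ℤ) w) (It φ ((t % n : ℕ) : ℤ) y)
        ≤ dist (It φ (t : ℤ) w) (It φ (t : ℤ) p') + dist (It φ (t : ℤ) p') (It φ ((t % n : ℕ) : ℤ) y) :=
          dist_triangle _ _ _
      _ ≤ ρ' + (ρ * lam ^ (n - t % n) + ρ * lam ^ (t % n) *
            ∑ i ∈ Finset.range (t / n + 1), (lam ^ n) ^ i) :=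
          add_le_add (by rw [dist_comm]; exact e1) e2
      _ ≤ ρ' + ρ * C := by
          have := hboundC (t / n) (t % n) (Nat.mod_lt t (by omega)).le
          linarith
  -- backward shadowing of w
  have Bwd : ∀ t : ℕ, dist (It φ (-(t : ℤ)) w) (It φ ((n : ℤ) - ((t % n : ℕ) : ℤ)) y) ≤ R := by
    intro t
    have e1 : dist (It φ (-(t : ℤ)) p) (It φ (-(t : ℤ)) w) ≤ ρ' := by
      have h := locU_contract had hεη hwU t
      calc dist (It φ (-(t : ℤ)) p) (It φ (-(t : ℤ)) w) ≤ lam ^ t * dist p w := h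
        _ ≤ 1 * ρ' := mul_le_mul (pow_le_one₀ hlam0.le hlam1.le) hd2' dist_nonneg zero_le_one
        _ = ρ' := one_mul _
    have e2 := hpSH (t / n) (t % n) (Nat.mod_lt t (by omega)).le
    have et : t / n * n + t % n = t := by rw [mul_comm]; exact Nat.div_add_mod t n
    rw [et] at e2
    calc dist (It φ (-(t : ℤ)) w) (It φ ((n : ℤ) - ((t % n : ℕ) : ℤ)) y)
        ≤ dist (It φ (-(t : ℤ)) w) (It φ (-(t : ℤ)) p) +
            dist (It φ (-(t : ℤ)) p) (It φ ((n : ℤ) - ((t % n : ℕ) : ℤ)) y) := dist_triangle _ _ _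
      _ ≤ ρ' + (ρ * lam ^ (n - t % n) + ρ * lam ^ (t % n) *
            ∑ i ∈ Finset.range (t / n + 1), (lam ^ n) ^ i) :=
          add_le_add (by rw [dist_comm]; exact e1) e2
      _ ≤ ρ' + ρ * C := by
          have := hboundC (t / n) (t % n) (Nat.mod_lt t (by omega)).le
          linarith
  -- the periodicity defect is everywhere small
  have hdef : ∀ j : ℤ, dist (It φ j (It φ (n : ℤ) w)) (It φ j w) ≤ εX := by
    intro j
    rw [It_add]
    rcases le_or_gt 0 j with hj | hj
    · set t := j.toNat with htdef
      have hjt : (t : ℤ) = j := Int.toNat_of_nonneg hj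
      have f1 := Fwd (t + n)
      have f2 := Fwd t
      rw [Nat.add_mod_right] at f1
      have e : ((t + n : ℕ) : ℤ) = j + n := by push_cast; omega
      rw [e] at f1
      rw [hjt] at f2
      calc dist (It φ (j + (n : ℤ)) w) (It φ j w)
          ≤ dist (It φ (j + (n : ℤ)) w) (It φ ((t % n : ℕ) : ℤ) y) +
              dist (It φ ((t % n : ℕ) : ℤ) y) (It φ j w) := dist_triangle _ _ _
        _ ≤ R + R := add_le_add f1 (by rw [dist_comm]; exact f2)
        _ ≤ εX := by linarith [hR2, hρ'εX]
    · set t := (-j).toNat with htdef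
      have hjt : (t : ℤ) = -j := Int.toNat_of_nonneg (by omega)
      have ht1 : 1 ≤ t := by omega
      rcases lt_or_ge t n with htn | hnt
      · -- case 1 ≤ t < n
        have f1 := Fwd (n - t)
        have b2 := Bwd t
        have e2 : (n - t) % n = n - t := Nat.mod_eq_of_lt (by omega)
        rw [e2] at f1
        have e1 : ((n - t : ℕ) : ℤ) = j + n := by rw [Nat.cast_sub htn.le]; omega
        rw [e1] at f1
        have e3 : t % n = t := Nat.mod_eq_of_lt htn
        rw [e3] at b2
        have e4 : -(t : ℤ) = j := by omega
        rw [e4] at b2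
        have e6 : (n : ℤ) - (t : ℤ) = j + n := by omega
        rw [e6] at b2
        calc dist (It φ (j + (n : ℤ)) w) (It φ j w)
            ≤ dist (It φ (j + (n : ℤ)) w) (It φ (j + (n : ℤ)) y) +
                dist (It φ (j + (n : ℤ)) y) (It φ j w) := dist_triangle _ _ _
          _ ≤ R + R := add_le_add f1 (by rw [dist_comm]; exact b2)
          _ ≤ εX := by linarith [hR2, hρ'εX]
      · -- case n ≤ t
        have b1 := Bwd (t - n)
        have b2 := Bwd t
        have em : t % n = (t - n) % n := Nat.mod_eq_sub_mod hnt
        rw [← em] at b1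
        have e1 : -((t - n : ℕ) : ℤ) = j + n := by
          rw [Nat.cast_sub hnt]; omega
        rw [e1] at b1
        have e2 : -(t : ℤ) = j := by omega
        rw [e2] at b2
        calc dist (It φ (j + (n : ℤ)) w) (It φ j w)
            ≤ dist (It φ (j + (n : ℤ)) w) (It φ ((n : ℤ) - ((t % n : ℕ) : ℤ)) y) +
                dist (It φ ((n : ℤ) - ((t % n : ℕ) : ℤ)) y) (It φ j w) := dist_triangle _ _ _
          _ ≤ R + R := add_le_add b1 (by rw [dist_comm]; exact b2)
          _ ≤ εX := by linarith [hR2, hρ'εX]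
  have hper : It φ ((n : ℕ) : ℤ) w = w := hexp.2 _ _ hdef
  refine ⟨w, ?_, n, hn1, hper⟩
  -- w is in U
  apply hrU
  rw [Metric.mem_ball]
  have f0 := Fwd 0
  simp only [Nat.zero_mod, Nat.cast_zero] at f0
  rw [It_zero, It_zero] at f0
  calc dist w x ≤ dist w y + dist y x := dist_triangle _ _ _
    _ < R + δ₀ := add_lt_add_of_le_of_lt f0 hy
    _ ≤ 2 * ρ' + ρ' := by linarith [hR2, hδ₀ρ']
    _ < r := by linarith [hρ'r, hρ'0]

end Paper
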